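/- For every N ∈ ℕ ∪ {0} there exists a constant C > 0, depending only on N, such that for every ε ∈ (0,1) there is a twice continuously differentiable function c : (0, ε^{−1}) → ℝ satisfying c''(r) + c'(r)/r + 8(N+1)² r^{2N}(1+r^{2N+2})^{−2} c(r) = −ε² r^{2N+2}(1+r^{2N+2})^{−2} for all 0 < r < ε^{−1}, with lim_{r→0⁺} c(r) = 0, lim_{r→0⁺} c'(r) = 0, and |c(r)| ≤ C·ε²·(log(2+r))² for all 0 < r < ε^{−1}. -/

import Mathlib

/-!
The dilations of the bubble give the explicit kernel element
`y₀ = (1 - r^{2N+2}) / (1 + r^{2N+2})` of the linearized operator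
`L y = y'' + y'/r + 8(N+1)² r^{2N} (1 + r^{2N+2})⁻² y`, and `y₁ = y₀ log r + 1/(N+1)` is a second
solution, normalised so that the Wronskian is `1/r`. Variation of parameters from the origin,
with `φ(s) = s · s^{2N+2} (1 + s^{2N+2})⁻²`, gives the solution
`ε² (y₀ ∫₀^r y₁ φ - y₁ ∫₀^r y₀ φ)`. Near `0`, `∫₀^r y₁ φ = O(r)` and `∫₀^r y₀ φ = O(r²)`; the latter
absorbs the logarithm of `y₁`, so the solution and its derivative are `O(r)` at the origin. For `r ≥ 1`,
`φ(s) ≤ 1/s` while `|y₀| ≤ 1` and `|y₁| ≤ 1 + log r`, so the integrals are `O(log r)` and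
`O(log² r)`, and the solution is `O(ε² log² r)`.
-/

open Filter Topology Set Real MeasureTheory

section VariationOfParameters

variable {w φ y₀ y₁ y₀' y₁' y₀'' y₁'' a b : ℝ → ℝ} {r : ℝ}

theorem hasDerivAt_variationOfParameters (hy₀ : HasDerivAt y₀ (y₀' r) r)
    (hy₁ : HasDerivAt y₁ (y₁' r) r) (ha : HasDerivAt a (y₁ r * φ r) r)
    (hb : HasDerivAt b (y₀ r * φ r) r) :
    HasDerivAt (fun s => y₀ s * a s - y₁ s * b s) (y₀' r * a r - y₁' r * b r) r :=
  ((hy₀.mul ha).sub (hy₁.mul hb)).congr_deriv (by ring)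

theorem radial_variationOfParameters
    (hy₀ : ∀ᶠ s in 𝓝 r, HasDerivAt y₀ (y₀' s) s) (hy₁ : ∀ᶠ s in 𝓝 r, HasDerivAt y₁ (y₁' s) s)
    (ha : ∀ᶠ s in 𝓝 r, HasDerivAt a (y₁ s * φ s) s)
    (hb : ∀ᶠ s in 𝓝 r, HasDerivAt b (y₀ s * φ s) s)
    (hy₀' : HasDerivAt y₀' (y₀'' r) r) (hy₁' : HasDerivAt y₁' (y₁'' r) r)
    (hL₀ : y₀'' r + y₀' r / r + w r * y₀ r = 0) (hL₁ : y₁'' r + y₁' r / r + w r * y₁ r = 0)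
    (hW : r * (y₀ r * y₁' r - y₀' r * y₁ r) = 1) :
    deriv (deriv fun s => y₀ s * a s - y₁ s * b s) r
      + deriv (fun s => y₀ s * a s - y₁ s * b s) r / r
      + w r * (y₀ r * a r - y₁ r * b r) = -φ r / r := by
  have hc : ∀ᶠ s in 𝓝 r, HasDerivAt (fun s => y₀ s * a s - y₁ s * b s)
      (y₀' s * a s - y₁' s * b s) s := by
    filter_upwards [hy₀, hy₁, ha, hb] with s h₀ h₁ ha hb
    exact hasDerivAt_variationOfParameters h₀ h₁ ha hb
  have hderiv : deriv (fun s => y₀ s * a s - y₁ s * b s) =ᶠ[𝓝 r] y₀' * a - y₁' * b :=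
    hc.mono fun s hs => hs.deriv
  have hr : r ≠ 0 := by rintro rfl; simp at hW
  rw [hderiv.deriv_eq, ((hy₀'.mul ha.self_of_nhds).sub (hy₁'.mul hb.self_of_nhds)).deriv,
    hc.self_of_nhds.deriv]
  linear_combination (norm := skip) a r * hL₀ - b r * hL₁ - φ r / r * hW
  field_simp
  ring

end VariationOfParameters

lemma contDiffOn_succ_integral {f : ℝ → ℝ} {U : Set ℝ} {n : ℕ} (hU : IsOpen U)
    (hf : Continuous f) (hfU : ContDiffOn ℝ n f U) (a : ℝ) :
    ContDiffOn ℝ (n + 1) (fun x => ∫ t in a..x, f t) U := by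
  rw [contDiffOn_succ_iff_deriv_of_isOpen hU]
  refine ⟨(intervalIntegral.differentiable_integral_of_continuous hf).differentiableOn,
    by simp, ?_⟩
  rwa [funext (hf.deriv_integral f a)]

lemma abs_integral_le_mul_log {g : ℝ → ℝ} {c r : ℝ} (hr : 1 ≤ r)
    (hg : ∀ s ∈ Icc 1 r, |g s| ≤ c * s⁻¹) : |∫ s in 1..r, g s| ≤ c * log r := by
  have hinv : IntervalIntegrable (fun s : ℝ => s⁻¹) volume 1 r :=
    intervalIntegral.intervalIntegrable_inv
      (fun s hs => by rw [uIcc_of_le hr] at hs; linarith [hs.1]) continuousOn_id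
  have h := intervalIntegral.norm_integral_le_of_norm_le (f := g) hr
    (ae_of_all _ fun s hs => hg s ⟨hs.1.le, hs.2⟩) (hinv.const_mul c)
  rwa [intervalIntegral.integral_const_mul, integral_inv_of_pos one_pos (by linarith),
    div_one] at h

lemma tendsto_nhdsGT_zero_of_abs_le_mul {f : ℝ → ℝ} {C : ℝ}
    (hf : ∀ r ∈ Ioc 0 1, |f r| ≤ C * r) : Tendsto f (𝓝[>] 0) (𝓝 0) := by
  have hlin : Tendsto (fun r : ℝ => C * r) (𝓝[>] 0) (𝓝 0) := by
    simpa using ((continuous_const_mul C).tendsto 0).mono_left nhdsWithin_le_nhds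
  exact squeeze_zero_norm' (eventually_of_mem (Ioc_mem_nhdsGT one_pos) hf) hlin

namespace LiouvilleBubble

lemma pow_two_mul_add_two_nonneg (N : ℕ) (r : ℝ) : 0 ≤ r ^ (2 * N + 2) :=
  Even.pow_nonneg ⟨N + 1, by ring⟩ r

lemma one_add_pow_pos (N : ℕ) (r : ℝ) : 0 < 1 + r ^ (2 * N + 2) := by
  linarith [pow_two_mul_add_two_nonneg N r]

noncomputable section

variable (N : ℕ)

/-- The kernel element generated by the dilations of the bubble. -/
def y₀ (r : ℝ) : ℝ := (1 - r ^ (2 * N + 2)) / (1 + r ^ (2 * N + 2))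

def y₀' (r : ℝ) : ℝ := -4 * (N + 1) * r ^ (2 * N + 1) / (1 + r ^ (2 * N + 2)) ^ 2

def y₀'' (r : ℝ) : ℝ :=
  -4 * (N + 1) * r ^ (2 * N) * (2 * N + 1 - (2 * N + 3) * r ^ (2 * N + 2))
    / (1 + r ^ (2 * N + 2)) ^ 3

def y₁ (r : ℝ) : ℝ := y₀ N r * log r + (N + 1 : ℝ)⁻¹

def y₁' (r : ℝ) : ℝ := y₀' N r * log r + y₀ N r / r

def y₁'' (r : ℝ) : ℝ := y₀'' N r * log r + 2 * y₀' N r / r - y₀ N r / r ^ 2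

def potential (r : ℝ) : ℝ := 8 * (N + 1 : ℝ) ^ 2 * r ^ (2 * N) / (1 + r ^ (2 * N + 2)) ^ 2

def forcing (r : ℝ) : ℝ := r ^ (2 * N + 2) / (1 + r ^ (2 * N + 2)) ^ 2

def intY₀ (r : ℝ) : ℝ := ∫ s in 0..r, y₀ N s * (s * forcing N s)

def intY₁ (r : ℝ) : ℝ := ∫ s in 0..r, y₁ N s * (s * forcing N s)

/-- The solution for `ε = 1`; the one for general `ε` is `ε²` times it. -/
def profile (r : ℝ) : ℝ := y₀ N r * intY₁ N r - y₁ N r * intY₀ N r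

end

variable {N : ℕ} {r : ℝ}

lemma pow_two_mul_add_one (r : ℝ) : r ^ (2 * N + 1) = r * r ^ (2 * N) := pow_succ' r _

lemma pow_two_mul_add_two (r : ℝ) : r ^ (2 * N + 2) = r ^ 2 * r ^ (2 * N) := by ring

lemma hasDerivAt_pow_two_mul_add_two (r : ℝ) :
    HasDerivAt (fun s : ℝ => s ^ (2 * N + 2)) ((2 * N + 2) * r ^ (2 * N + 1)) r := by
  simpa using hasDerivAt_pow (2 * N + 2) r

lemma hasDerivAt_pow_two_mul_add_one (r : ℝ) :
    HasDerivAt (fun s : ℝ => s ^ (2 * N + 1)) ((2 * N + 1) * r ^ (2 * N)) r := by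
  simpa using hasDerivAt_pow (2 * N + 1) r

lemma hasDerivAt_y₀ (r : ℝ) : HasDerivAt (y₀ N) (y₀' N r) r := by
  have hD := (one_add_pow_pos N r).ne'
  have hu := hasDerivAt_pow_two_mul_add_two (N := N) r
  refine ((hu.const_sub 1).div (hu.const_add 1) hD).congr_deriv ?_
  rw [y₀', pow_two_mul_add_one, pow_two_mul_add_two] at *
  field_simp
  ring

lemma hasDerivAt_y₀' (r : ℝ) : HasDerivAt (y₀' N) (y₀'' N r) r := by
  have hD := (one_add_pow_pos N r).ne'
  have hu := hasDerivAt_pow_two_mul_add_two (N := N) r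
  have hv := hasDerivAt_pow_two_mul_add_one (N := N) r
  refine ((hv.const_mul (-4 * (N + 1 : ℝ))).div ((hu.const_add 1).pow 2) (pow_ne_zero 2 hD))
    |>.congr_deriv ?_
  rw [pow_two_mul_add_two] at hD
  simp only [y₀'', Pi.pow_apply, pow_two_mul_add_one, pow_two_mul_add_two]
  push_cast
  field_simp
  ring

lemma hasDerivAt_y₁ (hr : r ≠ 0) : HasDerivAt (y₁ N) (y₁' N r) r := by
  refine (((hasDerivAt_y₀ r).mul (hasDerivAt_log hr)).add_const (N + 1 : ℝ)⁻¹).congr_deriv ?_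
  rw [y₁', div_eq_mul_inv]

lemma hasDerivAt_y₁' (hr : r ≠ 0) : HasDerivAt (y₁' N) (y₁'' N r) r := by
  refine (((hasDerivAt_y₀' r).mul (hasDerivAt_log hr)).add
    ((hasDerivAt_y₀ r).div (hasDerivAt_id r) hr)).congr_deriv ?_
  rw [y₁'', id]
  field_simp
  ring

lemma y₀_ode (hr : r ≠ 0) : y₀'' N r + y₀' N r / r + potential N r * y₀ N r = 0 := by
  have hD := (one_add_pow_pos N r).ne'
  rw [y₀'', y₀', potential, y₀, pow_two_mul_add_one, pow_two_mul_add_two] at *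
  field_simp
  ring

lemma y₁_ode (hr : r ≠ 0) : y₁'' N r + y₁' N r / r + potential N r * y₁ N r = 0 := by
  have hD := (one_add_pow_pos N r).ne'
  have key : 2 * y₀' N r / r + potential N r * (N + 1 : ℝ)⁻¹ = 0 := by
    rw [y₀', potential, pow_two_mul_add_one, pow_two_mul_add_two] at *
    field_simp
    ring
  rw [y₁'', y₁', y₁]
  linear_combination log r * y₀_ode hr + key

lemma mul_wronskian_eq_one (hr : r ≠ 0) : r * (y₀ N r * y₁' N r - y₀' N r * y₁ N r) = 1 := by
  have hD := (one_add_pow_pos N r).ne'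
  have hN : (N + 1 : ℝ) ≠ 0 := by positivity
  rw [y₁', y₁, y₀, y₀', pow_two_mul_add_one, pow_two_mul_add_two] at *
  field_simp
  ring

@[fun_prop]
lemma contDiff_y₀ {n : WithTop ℕ∞} : ContDiff ℝ n (y₀ N) := by
  unfold y₀
  fun_prop (disch := exact fun r => (one_add_pow_pos N r).ne')

@[fun_prop]
lemma contDiff_forcing {n : WithTop ℕ∞} : ContDiff ℝ n (forcing N) := by
  unfold forcing
  fun_prop (disch := exact fun r => pow_ne_zero 2 (one_add_pow_pos N r).ne')

lemma contDiffOn_y₁ {n : WithTop ℕ∞} : ContDiffOn ℝ n (y₁ N) (Ioi 0) := by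
  unfold y₁
  have := (contDiffOn_log (n := n)).mono (fun r (hr : r ∈ Ioi (0 : ℝ)) => ne_of_gt hr)
  fun_prop

lemma continuous_y₁_mul : Continuous fun s => y₁ N s * (s * forcing N s) := by
  have h : ∀ s, y₁ N s * (s * forcing N s)
      = y₀ N s * (s * log s) * forcing N s + (N + 1 : ℝ)⁻¹ * (s * forcing N s) := by
    intro s; rw [y₁]; ring
  simp only [h]
  have := continuous_mul_log
  fun_prop

lemma hasDerivAt_intY₀ (r : ℝ) : HasDerivAt (intY₀ N) (y₀ N r * (r * forcing N r)) r :=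
  (Continuous.integral_hasStrictDerivAt (by fun_prop) 0 r).hasDerivAt

lemma hasDerivAt_intY₁ (r : ℝ) : HasDerivAt (intY₁ N) (y₁ N r * (r * forcing N r)) r :=
  (continuous_y₁_mul.integral_hasStrictDerivAt 0 r).hasDerivAt

lemma contDiffOn_profile : ContDiffOn ℝ 2 (profile N) (Ioi 0) := by
  have h₀ : ContDiffOn ℝ 2 (intY₀ N) (Ioi 0) :=
    contDiffOn_succ_integral (n := 1) isOpen_Ioi (by fun_prop) (by fun_prop) 0
  have h₁ : ContDiffOn ℝ 2 (intY₁ N) (Ioi 0) :=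
    contDiffOn_succ_integral (n := 1) isOpen_Ioi continuous_y₁_mul
      (contDiffOn_y₁.mul (by fun_prop)) 0
  exact (contDiff_y₀.contDiffOn.mul h₁).sub (contDiffOn_y₁.mul h₀)

lemma hasDerivAt_profile (hr : r ≠ 0) :
    HasDerivAt (profile N) (y₀' N r * intY₁ N r - y₁' N r * intY₀ N r) r :=
  hasDerivAt_variationOfParameters (φ := fun s => s * forcing N s) (hasDerivAt_y₀ r)
    (hasDerivAt_y₁ hr) (hasDerivAt_intY₁ r) (hasDerivAt_intY₀ r)

lemma profile_ode (hr : 0 < r) :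
    deriv (deriv (profile N)) r + deriv (profile N) r / r + potential N r * profile N r
      = -forcing N r := by
  have h := radial_variationOfParameters (w := potential N) (φ := fun s => s * forcing N s)
    (Eventually.of_forall hasDerivAt_y₀) ((eventually_ne_nhds hr.ne').mono fun _ => hasDerivAt_y₁)
    (Eventually.of_forall hasDerivAt_intY₁) (Eventually.of_forall hasDerivAt_intY₀)
    (hasDerivAt_y₀' r) (hasDerivAt_y₁' hr.ne') (y₀_ode hr.ne') (y₁_ode hr.ne')
    (mul_wronskian_eq_one hr.ne')
  rwa [neg_div, mul_div_cancel_left₀ _ hr.ne'] at h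

lemma abs_y₀_le_one (r : ℝ) : |y₀ N r| ≤ 1 := by
  have hu := pow_two_mul_add_two_nonneg N r
  rw [y₀, abs_div, abs_of_pos (one_add_pow_pos N r), div_le_one (one_add_pow_pos N r)]
  exact abs_le.mpr ⟨by linarith, by linarith⟩

lemma abs_y₁_le (r : ℝ) : |y₁ N r| ≤ |log r| + 1 := by
  have hN : (N + 1 : ℝ)⁻¹ ≤ 1 := inv_le_one_of_one_le₀ (by simp)
  calc |y₁ N r| ≤ |y₀ N r * log r| + |(N + 1 : ℝ)⁻¹| := abs_add_le _ _
    _ = |y₀ N r| * |log r| + (N + 1 : ℝ)⁻¹ := by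
        rw [abs_mul, abs_of_pos (a := (N + 1 : ℝ)⁻¹) (by positivity)]
    _ ≤ 1 * |log r| + 1 := by gcongr; exact abs_y₀_le_one r
    _ = |log r| + 1 := by ring

lemma abs_y₀'_le (hr₀ : 0 ≤ r) (hr₁ : r ≤ 1) : |y₀' N r| ≤ 4 * (N + 1) := by
  have hD : 1 ≤ (1 + r ^ (2 * N + 2)) ^ 2 :=
    one_le_pow₀ (by linarith [pow_two_mul_add_two_nonneg N r])
  have h : y₀' N r = -(4 * (N + 1) * r ^ (2 * N + 1) / (1 + r ^ (2 * N + 2)) ^ 2) := by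
    rw [y₀']; ring
  rw [h, abs_neg, abs_of_nonneg (by positivity), div_le_iff₀ (by positivity)]
  calc 4 * (N + 1) * r ^ (2 * N + 1) ≤ 4 * (N + 1) * 1 := by gcongr; exact pow_le_one₀ hr₀ hr₁
    _ ≤ 4 * (N + 1) * (1 + r ^ (2 * N + 2)) ^ 2 := by gcongr

lemma forcing_nonneg (r : ℝ) : 0 ≤ forcing N r :=
  div_nonneg (pow_two_mul_add_two_nonneg N r) (sq_nonneg _)

lemma forcing_le_one (r : ℝ) : forcing N r ≤ 1 := by
  have hu := pow_two_mul_add_two_nonneg N r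
  exact div_le_one_of_le₀ (by nlinarith) (sq_nonneg _)

lemma forcing_le_inv_sq (hr : 1 ≤ r) : forcing N r ≤ (r ^ 2)⁻¹ := by
  have hr2 : r ^ 2 ≤ r ^ (2 * N + 2) := pow_le_pow_right₀ hr (by omega)
  have hu : 0 < r ^ (2 * N + 2) := by positivity
  calc forcing N r ≤ r ^ (2 * N + 2) / (r ^ (2 * N + 2)) ^ 2 :=
        div_le_div_of_nonneg_left hu.le (by positivity) (by gcongr; linarith)
    _ = (r ^ (2 * N + 2))⁻¹ := by field_simp
    _ ≤ (r ^ 2)⁻¹ := inv_anti₀ (by positivity) hr2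

lemma abs_mul_mul_forcing_le (y : ℝ) {s : ℝ} (hs : 0 ≤ s) : |y * (s * forcing N s)| ≤ |y| * s := by
  rw [abs_mul, abs_of_nonneg (mul_nonneg hs (forcing_nonneg s))]
  gcongr
  exact mul_le_of_le_one_right hs (forcing_le_one s)

lemma abs_mul_mul_forcing_le_inv (y : ℝ) {s : ℝ} (hs : 1 ≤ s) :
    |y * (s * forcing N s)| ≤ |y| * s⁻¹ := by
  have hs₀ : 0 < s := by linarith
  rw [abs_mul, abs_of_nonneg (mul_nonneg hs₀.le (forcing_nonneg s))]
  gcongr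
  calc s * forcing N s ≤ s * (s ^ 2)⁻¹ := by gcongr; exact forcing_le_inv_sq hs
    _ = s⁻¹ := by field_simp

lemma abs_intY₀_le_sq (hr : 0 ≤ r) : |intY₀ N r| ≤ r ^ 2 := by
  have h := intervalIntegral.norm_integral_le_of_norm_le_const (a := 0) (b := r) (C := r)
    (f := fun s => y₀ N s * (s * forcing N s)) fun s hs => by
      rw [uIoc_of_le hr] at hs
      calc |y₀ N s * (s * forcing N s)| ≤ |y₀ N s| * s := abs_mul_mul_forcing_le _ hs.1.le
        _ ≤ 1 * r := mul_le_mul (abs_y₀_le_one s) hs.2 hs.1.le zero_le_one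
        _ = r := one_mul r
  rw [sub_zero, abs_of_nonneg hr, ← sq] at h
  exact h

lemma abs_intY₁_le_two_mul (hr₀ : 0 ≤ r) (hr₁ : r ≤ 1) : |intY₁ N r| ≤ 2 * r := by
  have h := intervalIntegral.norm_integral_le_of_norm_le_const (a := 0) (b := r) (C := 2)
    (f := fun s => y₁ N s * (s * forcing N s)) fun s hs => by
      rw [uIoc_of_le hr₀] at hs
      have hlog := abs_log_mul_self_lt s hs.1 (hs.2.trans hr₁)
      calc |y₁ N s * (s * forcing N s)| ≤ |y₁ N s| * s := abs_mul_mul_forcing_le _ hs.1.le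
        _ ≤ (|log s| + 1) * s := mul_le_mul_of_nonneg_right (abs_y₁_le s) hs.1.le
        _ = |log s * s| + s := by rw [abs_mul, abs_of_pos hs.1]; ring
        _ ≤ 2 := by linarith [hs.2]
  rwa [sub_zero, abs_of_nonneg hr₀] at h

lemma abs_intY₀_le_log (hr : 1 ≤ r) : |intY₀ N r| ≤ 1 + log r := by
  have hcont : Continuous fun s => y₀ N s * (s * forcing N s) := by fun_prop
  have htail : |∫ s in 1..r, y₀ N s * (s * forcing N s)| ≤ 1 * log r :=
    abs_integral_le_mul_log hr fun s hs =>
      (abs_mul_mul_forcing_le_inv _ hs.1).trans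
        (mul_le_mul_of_nonneg_right (abs_y₀_le_one s) (inv_nonneg.2 (by linarith [hs.1])))
  have hsplit : intY₀ N r = intY₀ N 1 + ∫ s in 1..r, y₀ N s * (s * forcing N s) :=
    (intervalIntegral.integral_add_adjacent_intervals (hcont.intervalIntegrable _ _)
      (hcont.intervalIntegrable _ _)).symm
  have hhead : |intY₀ N 1| ≤ 1 := by simpa using abs_intY₀_le_sq (N := N) zero_le_one
  rw [hsplit]
  linarith [abs_add_le (intY₀ N 1) (∫ s in 1..r, y₀ N s * (s * forcing N s))]

lemma abs_intY₁_le_log (hr : 1 ≤ r) : |intY₁ N r| ≤ 2 + (log r + 1) * log r := by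
  have htail : |∫ s in 1..r, y₁ N s * (s * forcing N s)| ≤ (log r + 1) * log r := by
    refine abs_integral_le_mul_log hr fun s hs =>
      (abs_mul_mul_forcing_le_inv _ hs.1).trans ?_
    have hs₀ : 0 < s := by linarith [hs.1]
    gcongr
    calc |y₁ N s| ≤ |log s| + 1 := abs_y₁_le s
      _ ≤ log r + 1 := by
        rw [abs_of_nonneg (log_nonneg hs.1)]; gcongr; exact hs.2
  have hsplit : intY₁ N r = intY₁ N 1 + ∫ s in 1..r, y₁ N s * (s * forcing N s) :=
    (intervalIntegral.integral_add_adjacent_intervals (continuous_y₁_mul.intervalIntegrable _ _)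
      (continuous_y₁_mul.intervalIntegrable _ _)).symm
  have hhead : |intY₁ N 1| ≤ 2 := by simpa using abs_intY₁_le_two_mul (N := N) zero_le_one le_rfl
  rw [hsplit]
  linarith [abs_add_le (intY₁ N 1) (∫ s in 1..r, y₁ N s * (s * forcing N s))]

lemma abs_profile_le_of_le_one (hr₀ : 0 < r) (hr₁ : r ≤ 1) : |profile N r| ≤ 4 * r := by
  have hlog := abs_log_mul_self_lt r hr₀ hr₁
  calc |profile N r| ≤ |y₀ N r| * |intY₁ N r| + |y₁ N r| * |intY₀ N r| := by
        rw [profile, ← abs_mul, ← abs_mul]; exact abs_sub _ _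
    _ ≤ 1 * (2 * r) + (|log r| + 1) * r ^ 2 := by
        gcongr
        exacts [abs_y₀_le_one r, abs_intY₁_le_two_mul hr₀.le hr₁, abs_y₁_le r,
          abs_intY₀_le_sq hr₀.le]
    _ = 2 * r + r * |log r * r| + r ^ 2 := by rw [abs_mul, abs_of_pos hr₀]; ring
    _ ≤ 4 * r := by nlinarith

lemma abs_deriv_profile_le (hr₀ : 0 < r) (hr₁ : r ≤ 1) :
    |deriv (profile N) r| ≤ (12 * (N + 1) + 1) * r := by
  have hlog := abs_log_mul_self_lt r hr₀ hr₁
  have hB : |intY₀ N r / r| ≤ r := by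
    rw [abs_div, abs_of_pos hr₀, div_le_iff₀ hr₀, ← sq]
    exact abs_intY₀_le_sq hr₀.le
  have hderiv : deriv (profile N) r = y₀' N r * intY₁ N r
      - y₀' N r * (log r * r) * (intY₀ N r / r) - y₀ N r * (intY₀ N r / r) := by
    rw [(hasDerivAt_profile hr₀.ne').deriv, y₁']
    field_simp
    ring
  rw [hderiv]
  calc _ ≤ |y₀' N r| * |intY₁ N r| + |y₀' N r| * |log r * r| * |intY₀ N r / r|
        + |y₀ N r| * |intY₀ N r / r| := by
        refine (abs_sub _ _).trans (add_le_add ((abs_sub _ _).trans ?_) ?_) <;> simp [abs_mul]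
    _ ≤ 4 * (N + 1) * (2 * r) + 4 * (N + 1) * 1 * r + 1 * r := by
        gcongr
        exacts [abs_y₀'_le hr₀.le hr₁, abs_intY₁_le_two_mul hr₀.le hr₁, abs_y₀'_le hr₀.le hr₁,
          abs_y₀_le_one r]
    _ = (12 * (N + 1) + 1) * r := by ring

lemma one_le_log_two_add (hr : 1 ≤ r) : 1 ≤ log (2 + r) := by
  rw [le_log_iff_exp_le (by linarith)]
  linarith [exp_one_lt_d9]

lemma abs_profile_le_of_one_le (hr : 1 ≤ r) : |profile N r| ≤ 8 * log (2 + r) ^ 2 := by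
  have hℓ : 0 ≤ log r := log_nonneg hr
  have hℓL : log r ≤ log (2 + r) := log_le_log (by linarith) (by linarith)
  have hL := one_le_log_two_add hr
  calc |profile N r| ≤ |y₀ N r| * |intY₁ N r| + |y₁ N r| * |intY₀ N r| := by
        rw [profile, ← abs_mul, ← abs_mul]; exact abs_sub _ _
    _ ≤ 1 * (2 + (log r + 1) * log r) + (|log r| + 1) * (1 + log r) := by
        gcongr
        exacts [abs_y₀_le_one r, abs_intY₁_le_log hr, abs_y₁_le r, abs_intY₀_le_log hr]
    _ ≤ 8 * log (2 + r) ^ 2 := by rw [abs_of_nonneg hℓ]; nlinarith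

lemma abs_profile_le (hr : 0 < r) : |profile N r| ≤ 16 * log (2 + r) ^ 2 := by
  rcases le_total r 1 with hr₁ | hr₁
  · have hlog2 : 1 / 2 ≤ log (2 + r) :=
      (by linarith [log_two_gt_d9] : (1 / 2 : ℝ) ≤ log 2).trans (log_le_log two_pos (by linarith))
    nlinarith [abs_profile_le_of_le_one (N := N) hr hr₁]
  · nlinarith [abs_profile_le_of_one_le (N := N) hr₁, sq_nonneg (log (2 + r))]

end LiouvilleBubble

open LiouvilleBubble

theorem stmt15 (N : ℕ) :
    ∃ C : ℝ, 0 < C ∧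
      ∀ ε : ℝ, 0 < ε → ε < 1 →
        ∃ c : ℝ → ℝ, ContDiffOn ℝ 2 c (Set.Ioo 0 ε⁻¹) ∧
          (∀ r : ℝ, 0 < r → r < ε⁻¹ →
            deriv (deriv c) r + deriv c r / r
              + 8 * (N + 1 : ℝ) ^ 2 * r ^ (2 * N) / (1 + r ^ (2 * N + 2)) ^ 2 * c r
            = -(ε ^ 2) * r ^ (2 * N + 2) / (1 + r ^ (2 * N + 2)) ^ 2) ∧
          Tendsto c (nhdsWithin 0 (Set.Ioi 0)) (nhds 0) ∧
          Tendsto (deriv c) (nhdsWithin 0 (Set.Ioi 0)) (nhds 0) ∧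
          (∀ r : ℝ, 0 < r → r < ε⁻¹ →
            |c r| ≤ C * ε ^ 2 * Real.log (2 + r) ^ 2) := by
  refine ⟨16, by norm_num, fun ε _ _ => ⟨fun r => ε ^ 2 * profile N r, ?_, fun r hr _ => ?_,
    ?_, ?_, fun r hr _ => ?_⟩⟩
  · exact (contDiffOn_const.mul contDiffOn_profile).mono Ioo_subset_Ioi_self
  · have h := profile_ode (N := N) hr
    simp only [potential, forcing] at h
    simp only [deriv_const_mul_field']
    linear_combination ε ^ 2 * h
  · simpa using (tendsto_nhdsGT_zero_of_abs_le_mul fun r hr =>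
      abs_profile_le_of_le_one (N := N) hr.1 hr.2).const_mul (ε ^ 2)
  · simpa [deriv_const_mul_field'] using (tendsto_nhdsGT_zero_of_abs_le_mul fun r hr =>
      abs_deriv_profile_le (N := N) hr.1 hr.2).const_mul (ε ^ 2)
  · calc |ε ^ 2 * profile N r| = ε ^ 2 * |profile N r| := by
          rw [abs_mul, abs_of_nonneg (sq_nonneg ε)]
      _ ≤ ε ^ 2 * (16 * log (2 + r) ^ 2) := by gcongr; exact abs_profile_le hr
      _ = 16 * ε ^ 2 * log (2 + r) ^ 2 := by ring
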